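/- Let a > 0, b ≥ 0, d > 0, κ > 1 be real numbers such that a > (2b/d)^{1/κ}. If for some T > 0 a nonnegative continuous function y : [0, T) → ℝ satisfies y(t) ≥ a − b·t + d·∫₀ᵗ y(s)^κ ds for all t ∈ (0, T), then T ≤ 2 / ((κ − 1)·a^{κ−1}·d). -/

import Mathlib

open MeasureTheory Set

/-!
Let `F t = a - b t + d ∫₀ᵗ y^κ`, so that `y ≥ F` and `F' = -b + d y^κ`. Since `d a^κ > 2b ≥ b`,
`F` is increasing whenever it touches the level `a`, so it never drops below `a`. Then
`b < (d/2) F^κ`, hence `F' ≥ -b + d F^κ ≥ (d/2) F^κ`, and `F^(1-κ)` decreases at rate at least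
`(κ-1) d/2`. Being positive, `F^(1-κ)` can do so only for a time less than
`a^(1-κ) / ((κ-1) d/2) = 2 / ((κ-1) a^(κ-1) d)`.
-/

theorem hasDerivWithinAt_integral_Icc {f : ℝ → ℝ} {a b x : ℝ} (hf : ContinuousOn f (Icc a b))
    (hx : x ∈ Icc a b) :
    HasDerivWithinAt (fun u => ∫ s in a..u, f s) (f x) (Icc a b) x := by
  have := Fact.mk hx
  exact intervalIntegral.integral_hasDerivWithinAt_right
    ((hf.mono (Icc_subset_Icc_right hx.2)).intervalIntegrable_of_Icc hx.1)
    (hf.stronglyMeasurableAtFilter_nhdsWithin measurableSet_Icc x) (hf x hx)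

theorem le_of_hasDerivWithinAt_pos_of_eq {f f' : ℝ → ℝ} {a b m : ℝ}
    (hf : ∀ x ∈ Icc a b, HasDerivWithinAt f (f' x) (Icc a b) x) (ha : m ≤ f a)
    (hpos : ∀ x ∈ Ico a b, f x = m → 0 < f' x) : ∀ x ∈ Icc a b, m ≤ f x := fun _ hx =>
  image_le_of_deriv_right_lt_deriv_boundary' (f' := fun _ => 0) continuousOn_const
    (fun x _ => hasDerivWithinAt_const x _ m) ha (fun x hx => (hf x hx).continuousWithinAt)
    (fun x hx => (hf x (Ico_subset_Icc_self hx)).mono_of_mem_nhdsWithin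
      (Icc_mem_nhdsGE_of_mem hx))
    (fun x hx hfx => hpos x hx hfx.symm) hx

/-- `F' ≥ c F^κ` makes `F^(1-κ) + (κ-1) c t` antitone. -/
theorem mul_sub_lt_rpow_of_mul_rpow_le_deriv {F F' : ℝ → ℝ} {c κ t₀ t₁ : ℝ} (hκ : 1 ≤ κ)
    (ht : t₀ ≤ t₁) (hF : ∀ x ∈ Icc t₀ t₁, HasDerivWithinAt F (F' x) (Icc t₀ t₁) x)
    (hpos : ∀ x ∈ Icc t₀ t₁, 0 < F x) (hF' : ∀ x ∈ Ioo t₀ t₁, c * F x ^ κ ≤ F' x) :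
    (κ - 1) * c * (t₁ - t₀) < F t₀ ^ (1 - κ) := by
  set H : ℝ → ℝ := fun u => F u ^ (1 - κ) + (κ - 1) * c * u
  have hH : ∀ x ∈ Icc t₀ t₁, HasDerivWithinAt H
      (F' x * (1 - κ) * F x ^ (-κ) + (κ - 1) * c) (Icc t₀ t₁) x := fun x hx => by
    have := ((hF x hx).rpow_const (p := 1 - κ) (Or.inl (hpos x hx).ne')).add
      ((hasDerivWithinAt_id x _).const_mul ((κ - 1) * c))
    exact this.congr_deriv (by rw [sub_sub_cancel_left, mul_one])
  have hanti : AntitoneOn H (Icc t₀ t₁) := by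
    refine antitoneOn_of_hasDerivWithinAt_nonpos (convex_Icc t₀ t₁)
      (f' := fun x => F' x * (1 - κ) * F x ^ (-κ) + (κ - 1) * c)
      (fun x hx => (hH x hx).continuousWithinAt) (fun x hx => ?_) (fun x hx => ?_)
    · rw [interior_Icc] at hx ⊢
      exact (hH x (Ioo_subset_Icc_self hx)).mono Ioo_subset_Icc_self
    · rw [interior_Icc] at hx
      have hFx := hpos x (Ioo_subset_Icc_self hx)
      have hc : c ≤ F' x * F x ^ (-κ) := by
        rw [Real.rpow_neg hFx.le, ← div_eq_mul_inv, le_div_iff₀ (Real.rpow_pos_of_pos hFx κ)]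
        exact hF' x hx
      nlinarith
  have hHt := hanti ⟨le_rfl, ht⟩ ⟨ht, le_rfl⟩ ht
  have hFt₁ : 0 < F t₁ ^ (1 - κ) := Real.rpow_pos_of_pos (hpos t₁ ⟨ht, le_rfl⟩) _
  simp only [H] at hHt
  linarith

theorem lt_of_neg_add_mul_rpow_le_deriv {F F' : ℝ → ℝ} {a b d κ t : ℝ} (ha : 0 < a)
    (hb : 0 ≤ b) (hd : 0 < d) (hκ : 1 < κ) (hba : 2 * b < d * a ^ κ) (ht : 0 ≤ t)
    (hF : ∀ x ∈ Icc 0 t, HasDerivWithinAt F (F' x) (Icc 0 t) x) (hF0 : F 0 = a)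
    (hF' : ∀ x ∈ Icc 0 t, 0 ≤ F x → -b + d * F x ^ κ ≤ F' x) :
    t < 2 / ((κ - 1) * a ^ (κ - 1) * d) := by
  have hκ0 : 0 < κ := by linarith
  have hFa : ∀ x ∈ Icc 0 t, a ≤ F x := by
    refine le_of_hasDerivWithinAt_pos_of_eq hF hF0.ge fun x hx hFx => ?_
    have := hF' x (Ico_subset_Icc_self hx) (hFx ▸ ha.le)
    rw [hFx] at this
    linarith
  have hF'κ : ∀ x ∈ Ioo 0 t, d / 2 * F x ^ κ ≤ F' x := fun x hx => by
    have hFx := hFa x (Ioo_subset_Icc_self hx)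
    have := Real.rpow_le_rpow ha.le hFx hκ0.le
    have := hF' x (Ioo_subset_Icc_self hx) (ha.le.trans hFx)
    nlinarith
  have hlife := mul_sub_lt_rpow_of_mul_rpow_le_deriv hκ.le ht hF
    (fun x hx => ha.trans_le (hFa x hx)) hF'κ
  rw [hF0, sub_zero] at hlife
  have hpow : a ^ (1 - κ) * a ^ (κ - 1) = 1 := by
    rw [← Real.rpow_add ha, sub_add_sub_cancel', sub_self, Real.rpow_zero]
  have hpos := Real.rpow_pos_of_pos ha (κ - 1)
  rw [lt_div_iff₀ (by positivity)]
  nlinarith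

theorem stmt0_general (a b d κ : ℝ) (ha : 0 < a) (hb : 0 ≤ b) (hd : 0 < d) (hκ : 1 < κ)
    (hcond : a > (2 * b / d) ^ (1 / κ)) (T : ℝ) (y : ℝ → ℝ)
    (hycont : ContinuousOn y (Ico 0 T))
    (hineq : ∀ t ∈ Ioo (0:ℝ) T, y t ≥ a - b * t + d * ∫ s in (0:ℝ)..t, (y s) ^ κ) :
    T ≤ 2 / ((κ - 1) * a ^ (κ - 1) * d) := by
  have hκ0 : 0 < κ := by linarith
  have hba : 2 * b < d * a ^ κ := by
    rw [gt_iff_lt, one_div, Real.rpow_inv_lt_iff_of_pos (by positivity) ha.le hκ0,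
      div_lt_iff₀ hd] at hcond
    linarith
  set F : ℝ → ℝ := fun t => a - b * t + d * ∫ s in (0:ℝ)..t, y s ^ κ
  suffices key : ∀ t ∈ Ioo 0 T, t < 2 / ((κ - 1) * a ^ (κ - 1) * d) by
    by_contra! h
    exact lt_irrefl _ (key _ ⟨by positivity, h⟩)
  intro t ht
  have hy : ContinuousOn y (Icc 0 t) := hycont.mono (Icc_subset_Ico_right ht.2)
  have hF : ∀ x ∈ Icc 0 t, HasDerivWithinAt F (-b + d * y x ^ κ) (Icc 0 t) x := fun x hx => by
    have := (((hasDerivWithinAt_id x _).const_mul b).const_sub a).add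
      ((hasDerivWithinAt_integral_Icc (hy.rpow_const fun _ _ => Or.inr hκ0.le) hx).const_mul d)
    exact this.congr_deriv (by ring)
  -- `hineq` says nothing at `0`; continuity extends it there.
  have hFy : ∀ x ∈ Icc 0 t, F x ≤ y x := by
    rw [← closure_Ioo ht.1.ne]
    refine le_on_closure (fun x hx => hineq x ⟨hx.1, hx.2.trans ht.2⟩) ?_ ?_ <;>
      rw [closure_Ioo ht.1.ne]
    exacts [fun x hx => (hF x hx).continuousWithinAt, hy]
  refine lt_of_neg_add_mul_rpow_le_deriv ha hb hd hκ hba ht.1.le hF (by simp [F])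
    fun x hx hFx => ?_
  have := Real.rpow_le_rpow hFx (hFy x hx) hκ0.le
  nlinarith

theorem stmt0 (a b d κ : ℝ) (ha : 0 < a) (hb : 0 ≤ b) (hd : 0 < d) (hκ : 1 < κ)
    (hcond : a > (2 * b / d) ^ (1 / κ)) (T : ℝ) (hT : 0 < T) (y : ℝ → ℝ)
    (hycont : ContinuousOn y (Ico 0 T)) (hynonneg : ∀ t ∈ Ico (0:ℝ) T, 0 ≤ y t)
    (hineq : ∀ t ∈ Ioo (0:ℝ) T, y t ≥ a - b * t + d * ∫ s in (0:ℝ)..t, (y s) ^ κ) :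
    T ≤ 2 / ((κ - 1) * a ^ (κ - 1) * d) :=
  stmt0_general a b d κ ha hb hd hκ hcond T y hycont hineq
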